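/- arXiv:2212.02377 — 3 statements merged into one kernel-verified Lean document; each statement's English description precedes it below -/
import Mathlib

section
/- Let F and G be maps satisfying: ‖F(y) − F(z)‖ ≤ η‖y − z‖ and ‖G(y) − G(z)‖ ≤ η‖y − z‖ for a constant η ∈ (0,1); ‖τ(z)‖ ≤ α where τ(z) := F(z) − G(z); and ‖τ(y) − τ(z)‖ ≤ β‖y − z‖. Define the parareal iterates by U_n^{k+1} = F(U_{n−1}^k) + G(U_{n−1}^{k+1}) − G(U_{n−1}^k), U_n^0 = G(U_{n−1}^0), U_0^k = u_0, and let u_n = F(u_{n−1}), u_0 given (F exact). Then the error e_n^k := ‖U_n^k − u_n‖ satisfies the recursive bounds e_n^{k} ≤ β e_{n−1}^{k−1} + η e_{n−1}^{k} and e_n^0 ≤ α + η e_{n−1}^0. -/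
theorem parareal_error_recursive_bounds
    (m : ℕ)
    (F G : EuclideanSpace ℝ (Fin m) → EuclideanSpace ℝ (Fin m))
    (α β η : ℝ) (hα : 0 < α) (hβ : 0 < β) (hη : η ∈ Set.Ioo (0 : ℝ) 1)
    (hF : ∀ y z, ‖F y - F z‖ ≤ η * ‖y - z‖)
    (hG : ∀ y z, ‖G y - G z‖ ≤ η * ‖y - z‖)
    (hτ : ∀ z, ‖F z - G z‖ ≤ α)
    (hτLip : ∀ y z, ‖(F y - G y) - (F z - G z)‖ ≤ β * ‖y - z‖)
    (u₀ : EuclideanSpace ℝ (Fin m))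
    (U : ℕ → ℕ → EuclideanSpace ℝ (Fin m))
    (u : ℕ → EuclideanSpace ℝ (Fin m))
    (hu0 : u 0 = u₀)
    (hu : ∀ n, 1 ≤ n → u n = F (u (n - 1)))
    (hU0k : ∀ k, U 0 k = u₀)
    (hUn0 : ∀ n, 1 ≤ n → U n 0 = G (U (n - 1) 0))
    (hUnk : ∀ n k, 1 ≤ n →
      U n (k + 1) = F (U (n - 1) k) + G (U (n - 1) (k + 1)) - G (U (n - 1) k)) :
    ∀ n, 1 ≤ n →
      (∀ k, 1 ≤ k →
        ‖U n k - u n‖ ≤ β * ‖U (n - 1) (k - 1) - u (n - 1)‖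
          + η * ‖U (n - 1) k - u (n - 1)‖) ∧
      ‖U n 0 - u n‖ ≤ α + η * ‖U (n - 1) 0 - u (n - 1)‖ := by
  intro n hn
  constructor
  · intro k hk
    obtain ⟨j, rfl⟩ : ∃ j, k = j + 1 := ⟨k - 1, (Nat.succ_pred_eq_of_pos hk).symm⟩
    have hrec := hUnk n j hn
    have hun := hu n hn
    have key : U n (j + 1) - u n =
        ((F (U (n - 1) j) - G (U (n - 1) j)) - (F (u (n - 1)) - G (u (n - 1))))
          + (G (U (n - 1) (j + 1)) - G (u (n - 1))) := by
      rw [hrec, hun]; abel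
    rw [key, Nat.add_sub_cancel]
    calc ‖_ + _‖ ≤ ‖(F (U (n - 1) j) - G (U (n - 1) j)) - (F (u (n - 1)) - G (u (n - 1)))‖
          + ‖G (U (n - 1) (j + 1)) - G (u (n - 1))‖ := norm_add_le _ _
      _ ≤ β * ‖U (n - 1) j - u (n - 1)‖ + η * ‖U (n - 1) (j + 1) - u (n - 1)‖ :=
        add_le_add (hτLip _ _) (hG _ _)
  · have hun := hu n hn
    have key : U n 0 - u n =
        (G (U (n - 1) 0) - G (u (n - 1))) + (G (u (n - 1)) - F (u (n - 1))) := by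
      rw [hUn0 n hn, hun]; abel
    rw [key]
    calc ‖_ + _‖ ≤ ‖G (U (n - 1) 0) - G (u (n - 1))‖ + ‖G (u (n - 1)) - F (u (n - 1))‖ :=
          norm_add_le _ _
      _ ≤ η * ‖U (n - 1) 0 - u (n - 1)‖ + α := by
          refine add_le_add (hG _ _) ?_
          rw [← norm_neg]; simpa using hτ (u (n - 1))
      _ = α + η * ‖U (n - 1) 0 - u (n - 1)‖ := by ring
end

section
/- Under the assumptions of the parareal convergence theorem (F exact solver and G coarse solver both η-Lipschitz with η ∈ (0,1), ‖F(z)−G(z)‖ ≤ α, and ‖(F−G)(y)−(F−G)(z)‖ ≤ β‖y−z‖), the parareal error satisfies ‖U_n^k − u_n‖ ≤ B_n^k where B_n^k = 0 for n ≤ k and B_n^k = α β^k Σ_{i=0}^{n−k−1} C(k+i,k) η^i for n > k. -/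
/-!
The error `e n k = U n k - u n` obeys `e (n+1) 0 = (G (U n 0) - G (u n)) + (G - F) (u n)` and
`e (n+1) (k+1) = ((F - G) (U n k) - (F - G) (u n)) + (G (U n (k+1)) - G (u n))`, so
`‖e (n+1) 0‖ ≤ η ‖e n 0‖ + α` and `‖e (n+1) (k+1)‖ ≤ β ‖e n k‖ + η ‖e n (k+1)‖`.
The bound `B n k` satisfies these recursions with equality, by Pascal's rule for the
coefficients `C(k+i, k)`, and vanishes for `n ≤ k`; induction on `n` concludes.
-/

open Finset

section ChoosePowSum

variable {R : Type*} [CommSemiring R]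

/-- Partial sums of the series `∑ C(k+i, k) xⁱ = (1 - x)^{-(k+1)}`. -/
def choosePowSum (x : R) (k N : ℕ) : R :=
  ∑ i ∈ range N, ((k + i).choose k : R) * x ^ i

theorem choosePowSum_zero_succ (x : R) (N : ℕ) :
    choosePowSum x 0 (N + 1) = x * choosePowSum x 0 N + 1 := by
  simpa [choosePowSum] using geom_sum_succ (x := x) (n := N)

theorem choosePowSum_succ_left (x : R) (k N : ℕ) :
    choosePowSum x (k + 1) N = choosePowSum x k N + x * choosePowSum x (k + 1) (N - 1) := by
  cases N with
  | zero => simp [choosePowSum]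
  | succ M =>
    have pascal : ∀ i, (k + 1 + (i + 1)).choose (k + 1)
        = (k + (i + 1)).choose k + (k + 1 + i).choose (k + 1) := fun i => by
      rw [show k + 1 + (i + 1) = (k + 1 + i) + 1 by omega, Nat.choose_succ_succ',
        add_right_comm, add_assoc k i]
    simp only [choosePowSum, sum_range_succ' _ M, pascal, Nat.cast_add, add_mul, sum_add_distrib,
      mul_sum, Nat.add_sub_cancel, pow_succ', mul_left_comm x, add_zero, Nat.choose_self,
      Nat.cast_one, pow_zero, mul_one]
    ring

end ChoosePowSum

/-- `B_n^k` without the case split: for `n ≤ k` the sum is empty. -/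
def pararealBound (α β η : ℝ) (n k : ℕ) : ℝ :=
  α * β ^ k * choosePowSum η k (n - k)

theorem pararealBound_of_le {α β η : ℝ} {n k : ℕ} (h : n ≤ k) : pararealBound α β η n k = 0 := by
  simp [pararealBound, choosePowSum, Nat.sub_eq_zero_of_le h]

theorem pararealBound_succ_zero (α β η : ℝ) (n : ℕ) :
    pararealBound α β η (n + 1) 0 = η * pararealBound α β η n 0 + α := by
  simp only [pararealBound, Nat.sub_zero, choosePowSum_zero_succ]
  ring

theorem pararealBound_succ_succ (α β η : ℝ) (n k : ℕ) :
    pararealBound α β η (n + 1) (k + 1)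
      = β * pararealBound α β η n k + η * pararealBound α β η n (k + 1) := by
  rw [pararealBound, pararealBound, pararealBound, Nat.add_sub_add_right,
    choosePowSum_succ_left, Nat.sub_sub]
  ring

section Parareal

variable {E : Type*} [SeminormedAddCommGroup E] {F G : E → E} {α β η : ℝ}

theorem norm_coarse_sub_fine_le (hG : ∀ y z, ‖G y - G z‖ ≤ η * ‖y - z‖)
    (hτ : ∀ z, ‖F z - G z‖ ≤ α) (a b : E) : ‖G a - F b‖ ≤ η * ‖a - b‖ + α := by
  calc ‖G a - F b‖ = ‖(G a - G b) - (F b - G b)‖ := by congr 1; abel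
    _ ≤ η * ‖a - b‖ + α := (norm_sub_le _ _).trans (add_le_add (hG a b) (hτ b))

theorem norm_correction_sub_fine_le (hG : ∀ y z, ‖G y - G z‖ ≤ η * ‖y - z‖)
    (hτLip : ∀ y z, ‖(F y - G y) - (F z - G z)‖ ≤ β * ‖y - z‖) (a b c : E) :
    ‖F a + G c - G a - F b‖ ≤ β * ‖a - b‖ + η * ‖c - b‖ := by
  calc ‖F a + G c - G a - F b‖ = ‖((F a - G a) - (F b - G b)) + (G c - G b)‖ := by
        congr 1; abel
    _ ≤ β * ‖a - b‖ + η * ‖c - b‖ := (norm_add_le _ _).trans (add_le_add (hτLip a b) (hG c b))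

theorem norm_parareal_sub_le (hβ : 0 ≤ β) (hη : 0 ≤ η)
    (hG : ∀ y z, ‖G y - G z‖ ≤ η * ‖y - z‖) (hτ : ∀ z, ‖F z - G z‖ ≤ α)
    (hτLip : ∀ y z, ‖(F y - G y) - (F z - G z)‖ ≤ β * ‖y - z‖)
    {U : ℕ → ℕ → E} {u : ℕ → E} (h0 : ∀ k, U 0 k = u 0) (hu : ∀ n, u (n + 1) = F (u n))
    (hU0 : ∀ n, U (n + 1) 0 = G (U n 0))
    (hU : ∀ n k, U (n + 1) (k + 1) = F (U n k) + G (U n (k + 1)) - G (U n k)) (n k : ℕ) :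
    ‖U n k - u n‖ ≤ pararealBound α β η n k := by
  induction n generalizing k with
  | zero => simp [h0, pararealBound_of_le (Nat.zero_le k)]
  | succ n ih =>
    cases k with
    | zero =>
      rw [hU0, hu, pararealBound_succ_zero]
      calc ‖G (U n 0) - F (u n)‖ ≤ η * ‖U n 0 - u n‖ + α := norm_coarse_sub_fine_le hG hτ _ _
        _ ≤ η * pararealBound α β η n 0 + α := by gcongr; exact ih 0
    | succ k =>
      rw [hU, hu, pararealBound_succ_succ]
      calc ‖F (U n k) + G (U n (k + 1)) - G (U n k) - F (u n)‖
          ≤ β * ‖U n k - u n‖ + η * ‖U n (k + 1) - u n‖ :=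
            norm_correction_sub_fine_le hG hτLip _ _ _
        _ ≤ β * pararealBound α β η n k + η * pararealBound α β η n (k + 1) := by
            gcongr <;> apply ih

end Parareal

theorem parareal_convergence_decaying_general
    (m : ℕ)
    (F G : EuclideanSpace ℝ (Fin m) → EuclideanSpace ℝ (Fin m))
    (α β η : ℝ) (hβ : 0 < β) (hη : η ∈ Set.Ioo (0 : ℝ) 1)
    (hG : ∀ y z, ‖G y - G z‖ ≤ η * ‖y - z‖)
    (hτ : ∀ z, ‖F z - G z‖ ≤ α)
    (hτLip : ∀ y z, ‖(F y - G y) - (F z - G z)‖ ≤ β * ‖y - z‖)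
    (u₀ : EuclideanSpace ℝ (Fin m))
    (U : ℕ → ℕ → EuclideanSpace ℝ (Fin m))
    (u : ℕ → EuclideanSpace ℝ (Fin m))
    (hu0 : u 0 = u₀)
    (hu : ∀ n, 1 ≤ n → u n = F (u (n - 1)))
    (hU0k : ∀ k, U 0 k = u₀)
    (hUn0 : ∀ n, 1 ≤ n → U n 0 = G (U (n - 1) 0))
    (hUnk : ∀ n k, 1 ≤ n →
      U n (k + 1) = F (U (n - 1) k) + G (U (n - 1) (k + 1)) - G (U (n - 1) k)) :
    ∀ n k : ℕ,
      ‖U n k - u n‖ ≤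
        if n ≤ k then 0
        else α * β ^ k * ∑ i ∈ Finset.range (n - k), ((k + i).choose k : ℝ) * η ^ i := by
  intro n k
  have hbound : (if n ≤ k then 0
      else α * β ^ k * ∑ i ∈ Finset.range (n - k), ((k + i).choose k : ℝ) * η ^ i)
      = pararealBound α β η n k := by
    split_ifs with h
    · exact (pararealBound_of_le h).symm
    · rfl
  rw [hbound]
  exact norm_parareal_sub_le hβ.le hη.1.le hG hτ hτLip (fun k => by rw [hU0k, hu0])
    (fun n => hu (n + 1) n.succ_pos) (fun n => hUn0 (n + 1) n.succ_pos)
    (fun n k => hUnk (n + 1) k n.succ_pos) n k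

theorem parareal_convergence_decaying
    (m : ℕ)
    (F G : EuclideanSpace ℝ (Fin m) → EuclideanSpace ℝ (Fin m))
    (α β η : ℝ) (hα : 0 < α) (hβ : 0 < β) (hη : η ∈ Set.Ioo (0 : ℝ) 1)
    (hF : ∀ y z, ‖F y - F z‖ ≤ η * ‖y - z‖)
    (hG : ∀ y z, ‖G y - G z‖ ≤ η * ‖y - z‖)
    (hτ : ∀ z, ‖F z - G z‖ ≤ α)
    (hτLip : ∀ y z, ‖(F y - G y) - (F z - G z)‖ ≤ β * ‖y - z‖)
    (u₀ : EuclideanSpace ℝ (Fin m))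
    (U : ℕ → ℕ → EuclideanSpace ℝ (Fin m))
    (u : ℕ → EuclideanSpace ℝ (Fin m))
    (hu0 : u 0 = u₀)
    (hu : ∀ n, 1 ≤ n → u n = F (u (n - 1)))
    (hU0k : ∀ k, U 0 k = u₀)
    (hUn0 : ∀ n, 1 ≤ n → U n 0 = G (U (n - 1) 0))
    (hUnk : ∀ n k, 1 ≤ n →
      U n (k + 1) = F (U (n - 1) k) + G (U (n - 1) (k + 1)) - G (U (n - 1) k)) :
    ∀ n k : ℕ,
      ‖U n k - u n‖ ≤
        if n ≤ k then 0
        else α * β ^ k * ∑ i ∈ Finset.range (n - k), ((k + i).choose k : ℝ) * η ^ i :=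
  parareal_convergence_decaying_general m F G α β η hβ hη hG hτ hτLip u₀ U u hu0 hu hU0k hUn0 hUnk
end

section
/- Suppose ε_ℓ := ε(T'_ℓ) satisfies ε_ℓ = e^{(A−LC)(T'_ℓ − T'_{ℓ−1})} ε_{ℓ−1} + 𝒥'_ℓ, that ‖e^{(A−LC)t}‖ ≤ γ e^{−μt} for all t ≥ 0, and that ‖𝒥'_ℓ‖ ≤ γ̃ e^{−μ T'_ℓ}/2^ℓ for every ℓ ≥ 1. Then ‖ε(T'_ℓ)‖ ≤ γ(‖ε(0)‖ + γ̃) e^{−μ T'_ℓ} for all ℓ ≥ 0. -/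
/-!
Unrolling the recurrence gives the discrete variation-of-constants formula
`ε ℓ = e^{T'_ℓ M} ε 0 + ∑_{1 ≤ k ≤ ℓ} e^{(T'_ℓ - T'_k) M} 𝒥'_k` with `M = A - LC`. The decay bound
`‖e^{tM}‖ ≤ γ e^{-μt}` turns the `k`-th forcing term into at most `γ γ̃ e^{-μ T'_ℓ} / 2^k`, since the
exponents `T'_ℓ - T'_k` and `T'_k` add up to `T'_ℓ`; the weights `2^{-k}` sum to at most `1`.
-/

open NormedSpace Finset

theorem exp_add_smul {𝕂 𝔸 : Type*} [NontriviallyNormedField 𝕂] [CharZero 𝕂]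
    [ContinuousSMul ℚ 𝕂] [NormedRing 𝔸] [NormedAlgebra 𝕂 𝔸] [CompleteSpace 𝔸] (A : 𝔸) (s t : 𝕂) :
    exp ((s + t) • A) = exp (s • A) * exp (t • A) := by
  have hball : ∀ B : 𝔸, B ∈ Metric.eball (0 : 𝔸) (expSeries 𝕂 𝔸).radius := fun B =>
    (expSeries_radius_eq_top 𝕂 𝔸).symm ▸ edist_lt_top _ _
  rw [add_smul, exp_add_of_commute_of_mem_ball (((Commute.refl A).smul_left s).smul_right t)
    (hball _) (hball _)]

theorem sum_range_one_div_two_pow_succ_le_one (n : ℕ) :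
    ∑ k ∈ range n, 1 / (2 : ℝ) ^ (k + 1) ≤ 1 := by
  have h : ∑ k ∈ range n, 1 / (2 : ℝ) ^ (k + 1) = (∑ k ∈ range n, (1 / (2 : ℝ)) ^ k) / 2 := by
    rw [sum_div]
    congr 1 with k
    rw [pow_succ, div_pow, one_pow, div_div]
  linarith [sum_geometric_two_le n]

section DiscreteVariationOfConstants

variable {E : Type*} [NormedAddCommGroup E] [NormedSpace ℝ E]

theorem norm_apply_le_mul_exp_add {A : E →L[ℝ] E} {y : E} {μ γ c s u : ℝ}
    (hA : ‖A‖ ≤ γ * Real.exp (-μ * s)) (hy : ‖y‖ ≤ c * Real.exp (-μ * u)) (hγ : 0 ≤ γ) :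
    ‖A y‖ ≤ γ * c * Real.exp (-μ * (s + u)) :=
  calc ‖A y‖ ≤ ‖A‖ * ‖y‖ := A.le_opNorm y
    _ ≤ γ * Real.exp (-μ * s) * (c * Real.exp (-μ * u)) :=
      mul_le_mul hA hy (norm_nonneg y) (by positivity)
    _ = γ * c * Real.exp (-μ * (s + u)) := by
      rw [mul_add, Real.exp_add]
      ring

variable (S : ℝ → E →L[ℝ] E) (hS_add : ∀ a b, S (a + b) = S a * S b) (hS_zero : S 0 = 1)
  (t : ℕ → ℝ) (x J : ℕ → E) (hx : ∀ n, x (n + 1) = S (t (n + 1) - t n) (x n) + J (n + 1))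
include hS_add hS_zero hx

theorem eq_apply_add_sum_of_succ_eq (n : ℕ) :
    x n = S (t n - t 0) (x 0) + ∑ k ∈ range n, S (t n - t (k + 1)) (J (k + 1)) := by
  have hcomp : ∀ a b y, S a (S b y) = S (a + b) y := fun a b y => by rw [hS_add]; rfl
  induction n with
  | zero => simp [hS_zero]
  | succ n ih =>
    rw [hx, ih, map_add, map_sum, hcomp, sub_add_sub_cancel, sum_range_succ, sub_self, hS_zero,
      one_apply_eq_self, add_assoc]
    simp only [hcomp, sub_add_sub_cancel]

theorem norm_le_mul_exp_of_succ_eq (ht0 : t 0 = 0) (ht : Monotone t) {μ γ c : ℝ}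
    (hγ : 0 ≤ γ) (hc : 0 ≤ c) (hS : ∀ s, 0 ≤ s → ‖S s‖ ≤ γ * Real.exp (-μ * s))
    (hJ : ∀ n, ‖J (n + 1)‖ ≤ c * Real.exp (-μ * t (n + 1)) / 2 ^ (n + 1)) (n : ℕ) :
    ‖x n‖ ≤ γ * (‖x 0‖ + c) * Real.exp (-μ * t n) := by
  have hforcing : ∀ k ∈ range n, ‖S (t n - t (k + 1)) (J (k + 1))‖
      ≤ γ * Real.exp (-μ * t n) * c * (1 / 2 ^ (k + 1)) := by
    intro k hk
    have hkn : t (k + 1) ≤ t n := ht (mem_range.mp hk)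
    have hJk : ‖J (k + 1)‖ ≤ c / 2 ^ (k + 1) * Real.exp (-μ * t (k + 1)) :=
      (hJ k).trans_eq (by ring)
    calc _ ≤ γ * (c / 2 ^ (k + 1)) * Real.exp (-μ * (t n - t (k + 1) + t (k + 1))) :=
          norm_apply_le_mul_exp_add (hS _ (sub_nonneg.mpr hkn)) hJk hγ
      _ = _ := by rw [sub_add_cancel]; ring
  have hinitial : ‖S (t n) (x 0)‖ ≤ γ * Real.exp (-μ * t n) * ‖x 0‖ :=
    ((S (t n)).le_opNorm _).trans
      (mul_le_mul_of_nonneg_right (hS _ (ht0 ▸ ht (Nat.zero_le n))) (norm_nonneg _))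
  rw [eq_apply_add_sum_of_succ_eq S hS_add hS_zero t x J hx n, ht0, sub_zero]
  calc _ ≤ ‖S (t n) (x 0)‖ + ∑ k ∈ range n, ‖S (t n - t (k + 1)) (J (k + 1))‖ :=
        (norm_add_le _ _).trans (add_le_add_right (norm_sum_le _ _) _)
    _ ≤ γ * Real.exp (-μ * t n) * ‖x 0‖
          + γ * Real.exp (-μ * t n) * c * ∑ k ∈ range n, 1 / (2 : ℝ) ^ (k + 1) := by
        rw [mul_sum]; exact add_le_add hinitial (sum_le_sum hforcing)
    _ ≤ γ * Real.exp (-μ * t n) * ‖x 0‖ + γ * Real.exp (-μ * t n) * c * 1 := by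
        gcongr; exact sum_range_one_div_two_pow_succ_le_one n
    _ = γ * (‖x 0‖ + c) * Real.exp (-μ * t n) := by ring

end DiscreteVariationOfConstants

theorem variable_window_rate_preserved_general
    (m : ℕ)
    (ALC : EuclideanSpace ℝ (Fin m) →L[ℝ] EuclideanSpace ℝ (Fin m))
    (T' : ℕ → ℝ) (hT0 : T' 0 = 0) (hTmono : StrictMono T')
    (μ γ γt : ℝ) (hγ : 1 ≤ γ) (hγt : 0 < γt)
    (ε J : ℕ → EuclideanSpace ℝ (Fin m))
    (hrec : ∀ ℓ : ℕ, 1 ≤ ℓ →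
      ε ℓ = exp ((T' ℓ - T' (ℓ - 1)) • ALC) (ε (ℓ - 1)) + J ℓ)
    (hnorm : ∀ t : ℝ, 0 ≤ t → ‖exp (t • ALC)‖ ≤ γ * Real.exp (-μ * t))
    (hJ : ∀ ℓ : ℕ, 1 ≤ ℓ → ‖J ℓ‖ ≤ γt * Real.exp (-μ * T' ℓ) / 2 ^ ℓ) :
    ∀ ℓ : ℕ, ‖ε ℓ‖ ≤ γ * (‖ε 0‖ + γt) * Real.exp (-μ * T' ℓ) :=
  norm_le_mul_exp_of_succ_eq (fun s : ℝ => exp (s • ALC)) (fun a b => exp_add_smul ALC a b)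
    (by rw [zero_smul ℝ ALC, exp_zero]) T' ε J (fun n => hrec (n + 1) n.succ_pos) hT0
    hTmono.monotone (zero_le_one.trans hγ) hγt.le hnorm (fun n => hJ (n + 1) n.succ_pos)

theorem variable_window_rate_preserved
    (m : ℕ)
    (ALC : EuclideanSpace ℝ (Fin m) →L[ℝ] EuclideanSpace ℝ (Fin m))
    (T' : ℕ → ℝ) (hT0 : T' 0 = 0) (hTmono : StrictMono T')
    (μ γ γt : ℝ) (hμ : 0 < μ) (hγ : 1 ≤ γ) (hγt : 0 < γt)
    (ε J : ℕ → EuclideanSpace ℝ (Fin m))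
    (hrec : ∀ ℓ : ℕ, 1 ≤ ℓ →
      ε ℓ = exp ((T' ℓ - T' (ℓ - 1)) • ALC) (ε (ℓ - 1)) + J ℓ)
    (hnorm : ∀ t : ℝ, 0 ≤ t → ‖exp (t • ALC)‖ ≤ γ * Real.exp (-μ * t))
    (hJ : ∀ ℓ : ℕ, 1 ≤ ℓ → ‖J ℓ‖ ≤ γt * Real.exp (-μ * T' ℓ) / 2 ^ ℓ) :
    ∀ ℓ : ℕ, ‖ε ℓ‖ ≤ γ * (‖ε 0‖ + γt) * Real.exp (-μ * T' ℓ) :=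
  variable_window_rate_preserved_general m ALC T' hT0 hTmono μ γ γt hγ hγt ε J hrec hnorm hJ
end
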